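/- arXiv:1610.08747 — 2 statements merged into one kernel-verified Lean document; each statement's English description precedes it below -/
import Mathlib

section
/- Let Ω be a domain in a complex Banach space. Then the Lempert function l_Ω : Ω × Ω → [0,1) is upper semicontinuous. -/
open Filter Metric Set Topology MeasureTheory

/-- The Lempert function of a domain `Ω` in a complex Banach space. -/
noncomputable def lempert {E : Type*} [NormedAddCommGroup E] [NormedSpace ℂ E]
    (Ω : Set E) (z w : E) : ℝ :=
  sInf {r : ℝ | ∃ (f : ℂ → E) (l : ℂ), DifferentiableOn ℂ f (ball 0 1) ∧
    MapsTo f (ball 0 1) Ω ∧ f 0 = z ∧ f l = w ∧ l ∈ ball (0:ℂ) 1 ∧ r = ‖l‖}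

/-- The Poincaré distance from `0` to a point at "radius" `r`. -/
noncomputable def poincareDist (r : ℝ) : ℝ := (1/2) * Real.log ((1+r)/(1-r))

/-- The Kobayashi pseudo-distance of a domain `Ω`, defined via chains. -/
noncomputable def kobayashi {E : Type*} [NormedAddCommGroup E] [NormedSpace ℂ E]
    (Ω : Set E) (z w : E) : ℝ :=
  sInf {r : ℝ | ∃ (n : ℕ) (c : ℕ → E), c 0 = z ∧ c n = w ∧ (∀ i, i ≤ n → c i ∈ Ω) ∧
    r = ∑ i ∈ Finset.range n, poincareDist (lempert Ω (c i) (c (i+1)))}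

/-- `Ω` is (Kobayashi) hyperbolic: `kobayashi Ω` is a distance defining the norm topology. -/
def IsHyperbolic {E : Type*} [NormedAddCommGroup E] [NormedSpace ℂ E] (Ω : Set E) : Prop :=
  (∀ z ∈ Ω, ∀ w ∈ Ω, kobayashi Ω z w = 0 → z = w) ∧
  (∀ z ∈ Ω, ∀ ε > 0, ∃ δ > 0, ∀ w ∈ Ω, kobayashi Ω z w < δ → ‖w - z‖ < ε) ∧
  (∀ z ∈ Ω, ∀ ε > 0, ∃ δ > 0, ∀ w ∈ Ω, ‖w - z‖ < δ → kobayashi Ω z w < ε)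

/-- A sequence in `Ω` which is Cauchy for the Kobayashi pseudo-distance. -/
def KCauchy {E : Type*} [NormedAddCommGroup E] [NormedSpace ℂ E]
    (Ω : Set E) (x : ℕ → E) : Prop :=
  ∀ ε > 0, ∃ N, ∀ m ≥ N, ∀ n ≥ N, kobayashi Ω (x m) (x n) < ε

/-- `Ω` is complete hyperbolic. -/
def IsCompleteHyperbolic {E : Type*} [NormedAddCommGroup E] [NormedSpace ℂ E]
    (Ω : Set E) : Prop :=
  IsHyperbolic Ω ∧ ∀ x : ℕ → E, (∀ n, x n ∈ Ω) → KCauchy Ω x →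
    ∃ p ∈ Ω, Tendsto x atTop (nhds p)

/-- The filter of neighborhoods of `∞` (traces on `Ω` taken by `⊓ 𝓟 Ω` where needed). -/
noncomputable def atInfFilter (E : Type*) [NormedAddCommGroup E] : Filter E :=
  Filter.comap (fun z : E => ‖z‖) Filter.atTop

/-- The boundary point described by the filter `l` (either `𝓝 a` for `a ∈ ∂Ω`, or the
filter at `∞`) is a `k'`-point of `Ω`: no `k_Ω`-Cauchy sequence of `Ω` converges to it. -/
def KPrimeAt {E : Type*} [NormedAddCommGroup E] [NormedSpace ℂ E]
    (Ω : Set E) (l : Filter E) : Prop :=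
  ¬ ∃ x : ℕ → E, (∀ n, x n ∈ Ω) ∧ KCauchy Ω x ∧ Tendsto x atTop l

/-- A real-valued function is subharmonic on `U ⊆ ℂ`: upper semicontinuous and
satisfying the sub-mean-value inequality on closed disks contained in `U`. -/
def SubharmonicOnR (v : ℂ → ℝ) (U : Set ℂ) : Prop :=
  UpperSemicontinuousOn v U ∧ ∀ c : ℂ, ∀ r : ℝ, 0 < r → closedBall c r ⊆ U →
    v c ≤ (2 * Real.pi)⁻¹ *
      ∫ θ in (0:ℝ)..(2*Real.pi), v (c + (r : ℂ) * Complex.exp (θ * Complex.I))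

/-- Plurisubharmonicity on a domain of a complex Banach space. -/
def PlurisubharmonicOn {E : Type*} [NormedAddCommGroup E] [NormedSpace ℂ E]
    (u : E → ℝ) (Ω : Set E) : Prop :=
  UpperSemicontinuousOn u Ω ∧
    ∀ a b : E, SubharmonicOnR (fun t => u (a + t • b)) {t : ℂ | a + t • b ∈ Ω}

/-!
Let `f : Δ → Ω` be holomorphic with `f 0 = z`, `f λ = w` and `|λ| < y`. Precomposing with a
contraction `t ↦ θ t`, `θ < 1` close to `1`, makes the image relatively compact in `Ω` and
replaces `λ` by `λ / θ`, still of modulus `< y`; adding the affine correction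
`(1 - t/λ) (z' - z) + (t/λ) (w' - w)` then gives a competitor for every `(z', w')` close to
`(z, w)`. When `λ = 0` a constant disc with any small nonzero `λ` does the same job.

This needs one competitor for `(z, w)` to begin with (an empty infimum would be `0`), and that is
where connectedness enters. Call `z, w` joined by an entire curve if some entire `g` has
`g 0 = z`, `g 1 = w`, `g [0, 1] ⊆ Ω`. Such a curve can be prolonged along a segment `[w, w']` in
`Ω` by adding `ζ ^ N (w' - w)` with `N` large, so all points of `Ω` are joined to each other; and
`g ∘ ψ` is a competitor, where `ψ = (1 - cos (a log (1 - t))) / 2` maps `Δ` into a thin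
neighbourhood of `[0, 1]` and takes the values `0` and `1`.
-/

open Complex

namespace Complex

lemma norm_cos_sub_cos_re_le (z : ℂ) :
    ‖cos z - cos z.re‖ ≤ ‖cosh z.im - 1‖ + ‖sinh z.im‖ := by
  have hcos : ‖cos (z.re : ℂ)‖ ≤ 1 := by
    rw [← ofReal_cos, norm_real, Real.norm_eq_abs]; exact Real.abs_cos_le_one _
  have hsin : ‖sin (z.re : ℂ)‖ ≤ 1 := by
    rw [← ofReal_sin, norm_real, Real.norm_eq_abs]; exact Real.abs_sin_le_one _
  calc ‖cos z - cos z.re‖ = ‖cos z.re * (cosh z.im - 1) - sin z.re * sinh z.im * I‖ := by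
        have hz : cos z = cos z.re * cosh z.im - sin z.re * sinh z.im * I := by
          conv_lhs => rw [← re_add_im z]
          exact cos_add_mul_I _ _
        rw [hz]; congr 1; ring
    _ ≤ ‖cos z.re‖ * ‖cosh z.im - 1‖ + ‖sin z.re‖ * ‖sinh z.im‖ := by
        refine (norm_sub_le _ _).trans_eq ?_
        simp only [norm_mul, norm_I, mul_one]
    _ ≤ ‖cosh z.im - 1‖ + ‖sinh z.im‖ := by
        gcongr
        · exact mul_le_of_le_one_left (norm_nonneg _) hcos
        · exact mul_le_of_le_one_left (norm_nonneg _) hsin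

lemma exists_strip_one_sub_cos_div_two_mapsTo {η : ℝ} (hη : 0 < η) :
    ∃ h > 0, MapsTo (fun z => (1 - cos z) / 2) {z | |z.im| ≤ h}
      (thickening η (ofReal '' Icc 0 1)) := by
  have hcont : Continuous fun y : ℝ => ‖cosh (y : ℂ) - 1‖ + ‖sinh (y : ℂ)‖ := by fun_prop
  obtain ⟨δ, hδ, hsmall⟩ := Metric.continuous_iff.1 hcont 0 (2 * η) (by positivity)
  refine ⟨δ / 2, by positivity, fun z hz => ?_⟩
  have hbound : ‖cosh (z.im : ℂ) - 1‖ + ‖sinh (z.im : ℂ)‖ < 2 * η := by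
    have := hsmall z.im (by rw [Real.dist_0_eq_abs]; linarith [show |z.im| ≤ δ / 2 from hz])
    simp only [ofReal_zero, cosh_zero, sub_self, norm_zero, sinh_zero, add_zero,
      Real.dist_eq, sub_zero] at this
    exact (le_abs_self _).trans_lt this
  refine mem_thickening_iff.2 ⟨_, ⟨(1 - Real.cos z.re) / 2, ?_, rfl⟩, ?_⟩
  · constructor <;> linarith [Real.neg_one_le_cos z.re, Real.cos_le_one z.re]
  · rw [dist_eq_norm]
    calc ‖(1 - cos z) / 2 - (((1 - Real.cos z.re) / 2 : ℝ) : ℂ)‖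
        = ‖cos z - cos z.re‖ / 2 := by
          rw [show (1 - cos z) / 2 - (((1 - Real.cos z.re) / 2 : ℝ) : ℂ)
              = -(cos z - cos z.re) / 2 by push_cast; ring, norm_div, norm_neg]
          norm_num
      _ < η := by linarith [norm_cos_sub_cos_re_le z]

end Complex

lemma exists_disc_mapsTo_thickening_unitInterval {η : ℝ} (hη : 0 < η) :
    ∃ ψ : ℂ → ℂ, DifferentiableOn ℂ ψ (ball 0 1) ∧
      MapsTo ψ (ball 0 1) (thickening η (ofReal '' Icc 0 1)) ∧
      ψ 0 = 0 ∧ ∃ τ ∈ ball (0 : ℂ) 1, ψ τ = 1 := by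
  obtain ⟨h, hh, hstrip⟩ := exists_strip_one_sub_cos_div_two_mapsTo hη
  set a : ℝ := h / Real.pi
  have ha : 0 < a := by positivity
  have hslit : ∀ t ∈ ball (0 : ℂ) 1, 1 - t ∈ slitPlane := fun t ht =>
    mem_slitPlane_iff.2 <| Or.inl <| by
      have := (re_le_norm t).trans_lt (mem_ball_zero_iff.1 ht)
      simp only [sub_re, one_re]; linarith
  refine ⟨fun t => (1 - cos (a * log (1 - t))) / 2, fun t ht => ?_, fun t ht => ?_, by simp,
    (1 - Real.exp (-Real.pi / a) : ℝ), ?_, ?_⟩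
  · have := hslit t ht
    fun_prop (disch := assumption)
  · -- `|arg| ≤ π`, so `a * log (1 - t)` lies in the strip `|im| ≤ h`
    apply hstrip
    show |(a * log (1 - t)).im| ≤ h
    rw [im_ofReal_mul, log_im, abs_mul, abs_of_pos ha]
    calc a * |arg (1 - t)| ≤ a * Real.pi := by gcongr; exact abs_arg_le_pi _
      _ = h := div_mul_cancel₀ h Real.pi_ne_zero
  · have hexp : 0 < Real.exp (-Real.pi / a) := Real.exp_pos _
    have hexp1 : Real.exp (-Real.pi / a) < 1 :=
      Real.exp_lt_one_iff.2 (div_neg_of_neg_of_pos (neg_neg_of_pos Real.pi_pos) ha)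
    rw [mem_ball_zero_iff, norm_real, Real.norm_eq_abs, abs_lt]
    constructor <;> linarith
  · have hlog : log (1 - ((1 - Real.exp (-Real.pi / a) : ℝ) : ℂ)) = (-Real.pi / a : ℝ) := by
      rw [ofReal_sub, ofReal_one, sub_sub_cancel, ← ofReal_log (Real.exp_pos _).le, Real.log_exp]
    simp only [hlog, ← ofReal_mul, mul_div_cancel₀ _ ha.ne', ← ofReal_cos, Real.cos_neg,
      Real.cos_pi]
    norm_num

section EntireCurves

variable {E : Type*} [NormedAddCommGroup E] [NormedSpace ℂ E] {Ω : Set E} {z w w' : E}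

def EntireJoinedIn (Ω : Set E) (z w : E) : Prop :=
  ∃ g : ℂ → E, Differentiable ℂ g ∧ g 0 = z ∧ g 1 = w ∧ MapsTo g (ofReal '' Icc 0 1) Ω

lemma EntireJoinedIn.refl (hz : z ∈ Ω) : EntireJoinedIn Ω z z :=
  ⟨fun _ => z, differentiable_const z, rfl, rfl, fun _ _ => hz⟩

lemma EntireJoinedIn.of_segment_subset (hΩ : IsOpen Ω) (h : EntireJoinedIn Ω z w)
    (hseg : segment ℝ w w' ⊆ Ω) : EntireJoinedIn Ω z w' := by
  obtain ⟨g, hg, hg0, hg1, hgΩ⟩ := h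
  have hK : IsCompact (g '' (ofReal '' Icc 0 1) ∪ segment ℝ w w') := by
    refine ((isCompact_Icc.image continuous_ofReal).image hg.continuous).union ?_
    rw [segment_eq_image]
    exact isCompact_Icc.image (by fun_prop)
  obtain ⟨δ, hδ, hδΩ⟩ :=
    hK.exists_thickening_subset_open hΩ (union_subset hgΩ.image_subset hseg)
  obtain ⟨a, ha, hnear⟩ := Metric.continuousAt_iff.1 (hg.continuous.continuousAt (x := 1)) δ hδ
  obtain ⟨N, hN⟩ := exists_pow_lt_of_lt_one
    (show 0 < δ / (‖w' - w‖ + 1) by positivity) (show 1 - a < 1 by linarith)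
  refine ⟨fun ζ => g ζ + ζ ^ (N + 1) • (w' - w), by fun_prop, by simp [hg0],
    by simp [hg1], ?_⟩
  rintro _ ⟨s, hs, rfl⟩
  apply hδΩ
  by_cases hs1 : 1 - s < a
  · -- near `1`, `g s` is `δ`-close to `w` and the correction moves `w` along `[w, w']`
    refine mem_thickening_iff.2 ⟨w + (s ^ (N + 1) : ℝ) • (w' - w), Or.inr ?_, ?_⟩
    · rw [segment_eq_image']
      exact ⟨_, ⟨pow_nonneg hs.1 _, pow_le_one₀ hs.1 hs.2⟩, rfl⟩
    · rw [← coe_smul, ofReal_pow, dist_add_right, ← hg1]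
      refine hnear ?_
      rw [dist_eq_norm, ← ofReal_one, ← ofReal_sub, norm_real, Real.norm_eq_abs, abs_sub_comm,
        abs_of_nonneg (by linarith [hs.2])]
      exact hs1
  · -- away from `1`, the correction is at most `(1 - a) ^ N ‖w' - w‖ < δ`
    refine mem_thickening_iff.2 ⟨g s, Or.inl ⟨s, ⟨s, hs, rfl⟩, rfl⟩, ?_⟩
    have hpow : s ^ (N + 1) ≤ (1 - a) ^ N :=
      (pow_le_pow_of_le_one hs.1 hs.2 N.le_succ).trans
        (pow_le_pow_left₀ hs.1 (by linarith) N)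
    show dist (g s + _) (g s) < δ
    rw [dist_self_add_left, norm_smul, ← ofReal_pow, norm_real, Real.norm_eq_abs,
      abs_of_nonneg (pow_nonneg hs.1 _)]
    calc s ^ (N + 1) * ‖w' - w‖ ≤ δ / (‖w' - w‖ + 1) * ‖w' - w‖ := by
          gcongr; exact hpow.trans hN.le
      _ < δ := by
          rw [div_mul_eq_mul_div, div_lt_iff₀ (by positivity)]
          nlinarith [norm_nonneg (w' - w)]

lemma IsPreconnected.entireJoinedIn (hΩo : IsOpen Ω) (hΩc : IsPreconnected Ω) (hz : z ∈ Ω)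
    (hw : w ∈ Ω) : EntireJoinedIn Ω z w := by
  refine hΩc.induction₂' (fun x y => ∀ v, EntireJoinedIn Ω v x → EntireJoinedIn Ω v y)
    (fun x hx => ?_) (fun x y v _ _ _ hxy hyv u h => hyv u (hxy u h)) hz hw z
    (EntireJoinedIn.refl hz)
  obtain ⟨ρ, hρ, hball⟩ := Metric.isOpen_iff.1 hΩo x hx
  filter_upwards [nhdsWithin_le_nhds (ball_mem_nhds x hρ)] with y hy
  exact ⟨fun v h => h.of_segment_subset hΩo
      (((convex_ball x ρ).segment_subset (mem_ball_self hρ) hy).trans hball),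
    fun v h => h.of_segment_subset hΩo
      (((convex_ball x ρ).segment_subset hy (mem_ball_self hρ)).trans hball)⟩

end EntireCurves

section Lempert

variable {E : Type*} [NormedAddCommGroup E] [NormedSpace ℂ E] {Ω : Set E} {z w : E}
  {f : ℂ → E} {l : ℂ}

/-- A competitor in the infimum defining `lempert Ω z w`. -/
def IsLempertDisc (Ω : Set E) (z w : E) (f : ℂ → E) (l : ℂ) : Prop :=
  DifferentiableOn ℂ f (ball 0 1) ∧ MapsTo f (ball 0 1) Ω ∧ f 0 = z ∧ f l = w ∧
    l ∈ ball (0 : ℂ) 1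

lemma EntireJoinedIn.exists_isLempertDisc (hΩ : IsOpen Ω) (h : EntireJoinedIn Ω z w) :
    ∃ f l, IsLempertDisc Ω z w f l := by
  obtain ⟨g, hg, hg0, hg1, hgΩ⟩ := h
  obtain ⟨η, hη, hηΩ⟩ := (isCompact_Icc.image continuous_ofReal).exists_thickening_subset_open
    (hΩ.preimage hg.continuous) hgΩ
  obtain ⟨ψ, hψ, hψI, hψ0, τ, hτ, hψτ⟩ := exists_disc_mapsTo_thickening_unitInterval hη
  exact ⟨g ∘ ψ, τ, hg.comp_differentiableOn hψ, fun t ht => hηΩ (hψI ht),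
    by simp [hψ0, hg0], by simp [hψτ, hg1], hτ⟩

lemma lempert_le_norm (h : IsLempertDisc Ω z w f l) : lempert Ω z w ≤ ‖l‖ := by
  obtain ⟨hd, hm, h0, hl, hb⟩ := h
  exact csInf_le ⟨0, by rintro _ ⟨-, l', -, -, -, -, -, rfl⟩; exact norm_nonneg l'⟩
    ⟨f, l, hd, hm, h0, hl, hb, rfl⟩

lemma exists_isLempertDisc_norm_lt (hne : ∃ f l, IsLempertDisc Ω z w f l) {y : ℝ}
    (h : lempert Ω z w < y) : ∃ f l, IsLempertDisc Ω z w f l ∧ ‖l‖ < y := by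
  obtain ⟨f, l, hd, hm, h0, hl, hb⟩ := hne
  rw [lempert] at h
  obtain ⟨_, ⟨f', l', hd', hm', h0', hl', hb', rfl⟩, hlt⟩ := exists_lt_of_csInf_lt
    (by exact ⟨‖l‖, f, l, hd, hm, h0, hl, hb, rfl⟩) h
  exact ⟨f', l', ⟨hd', hm', h0', hl', hb'⟩, hlt⟩

lemma IsLempertDisc.exists_mapsTo_isCompact (hf : IsLempertDisc Ω z w f l) {r : ℝ}
    (hlr : ‖l‖ < r) : ∃ g l' K, IsLempertDisc Ω z w g l' ∧ IsCompact K ∧ K ⊆ Ω ∧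
      MapsTo g (ball 0 1) K ∧ l' ≠ 0 ∧ ‖l'‖ < r := by
  obtain ⟨hfd, hfΩ, hf0, hfl, hl1⟩ := hf
  rw [mem_ball_zero_iff] at hl1
  rcases eq_or_ne l 0 with rfl | hl0
  · have hzw : z = w := hf0.symm.trans hfl
    have hz : z ∈ Ω := hf0 ▸ hfΩ (mem_ball_self one_pos)
    have hr : 0 < r := (norm_nonneg _).trans_lt hlr
    have hc : ‖((min r 1 / 2 : ℝ) : ℂ)‖ = min r 1 / 2 := by
      rw [norm_real, Real.norm_of_nonneg (by positivity)]
    refine ⟨fun _ => z, (min r 1 / 2 : ℝ), {z}, ⟨differentiableOn_const z, fun _ _ => hz, rfl,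
      hzw, ?_⟩, isCompact_singleton, singleton_subset_iff.2 hz, fun _ _ => rfl,
      ofReal_ne_zero.2 (by positivity), ?_⟩
    · rw [mem_ball_zero_iff, hc]; linarith [min_le_right r 1]
    · rw [hc]; linarith [min_le_left r 1]
  · have hlpos : 0 < ‖l‖ := norm_pos_iff.2 hl0
    have hr : 0 < r := hlpos.trans hlr
    -- contract by a factor `θ < 1` so large that `l / θ` is still shorter than `r` and `1`
    obtain ⟨θ, hθl, hθ1⟩ := exists_between (max_lt ((div_lt_one hr).2 hlr) hl1)
    rw [max_lt_iff] at hθl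
    have hθ : 0 < θ := hlpos.trans hθl.2
    have hθc : (θ : ℂ) ≠ 0 := ofReal_ne_zero.2 hθ.ne'
    have hcontr : MapsTo (fun t : ℂ => (θ : ℂ) * t) (ball 0 1) (closedBall 0 θ) := fun t ht => by
      rw [mem_closedBall_zero_iff, norm_mul, norm_real, Real.norm_of_nonneg hθ.le]
      exact mul_le_of_le_one_right hθ.le (mem_ball_zero_iff.1 ht).le
    have hsub : closedBall (0 : ℂ) θ ⊆ ball 0 1 := closedBall_subset_ball hθ1
    have hl' : ‖l / θ‖ = ‖l‖ / θ := by rw [norm_div, norm_real, Real.norm_of_nonneg hθ.le]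
    refine ⟨fun t => f (θ * t), l / θ, f '' closedBall 0 θ,
      ⟨hfd.comp (by fun_prop) (hcontr.mono_right hsub), fun t ht => hfΩ (hsub (hcontr ht)),
        by simp [hf0], by simp [mul_div_cancel₀ _ hθc, hfl], ?_⟩,
      (isCompact_closedBall 0 θ).image_of_continuousOn (hfd.continuousOn.mono hsub),
      (image_mono hsub).trans hfΩ.image_subset, fun t ht => mem_image_of_mem f (hcontr ht),
      div_ne_zero hl0 hθc, ?_⟩
    · rw [mem_ball_zero_iff, hl', div_lt_one hθ]; exact hθl.2
    · rw [hl', div_lt_iff₀ hθ]; rw [div_lt_iff₀ hr] at hθl; linarith [hθl.1]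

lemma IsLempertDisc.eventually_lempert_le (hΩ : IsOpen Ω) {g : ℂ → E} {K : Set E}
    (hg : IsLempertDisc Ω z w g l) (hK : IsCompact K) (hKΩ : K ⊆ Ω)
    (hgK : MapsTo g (ball 0 1) K) (hl : l ≠ 0) :
    ∀ᶠ q in 𝓝 (z, w), lempert Ω q.1 q.2 ≤ ‖l‖ := by
  obtain ⟨hgd, -, hg0, hgl, hl1⟩ := hg
  obtain ⟨δ, hδ, hδΩ⟩ := hK.exists_thickening_subset_open hΩ hKΩ
  have hlpos : 0 < ‖l‖ := norm_pos_iff.2 hl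
  have hε : 0 < δ * ‖l‖ / 3 := by positivity
  filter_upwards [prod_mem_nhds (ball_mem_nhds z hε) (ball_mem_nhds w hε)]
    with ⟨z', w'⟩ ⟨hz', hw'⟩
  rw [mem_ball_iff_norm] at hz' hw'
  refine lempert_le_norm (f := fun t => g t + ((1 - t / l) • (z' - z) + (t / l) • (w' - w)))
    ⟨by fun_prop, fun t ht => hδΩ (mem_thickening_iff.2 ⟨g t, hgK ht, ?_⟩), by simp [hg0],
      by simp [div_self hl, hgl], hl1⟩
  have ht : ‖t / l‖ ≤ 1 / ‖l‖ := by
    rw [norm_div]; gcongr; exact (mem_ball_zero_iff.1 ht).le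
  have h1t : ‖1 - t / l‖ ≤ 2 / ‖l‖ := by
    have : 1 ≤ 1 / ‖l‖ := one_le_one_div hlpos (mem_ball_zero_iff.1 hl1).le
    refine (norm_sub_le _ _).trans ?_
    rw [norm_one]; linarith [show 2 / ‖l‖ = 1 / ‖l‖ + 1 / ‖l‖ by ring]
  calc dist (g t + ((1 - t / l) • (z' - z) + (t / l) • (w' - w))) (g t)
      ≤ ‖1 - t / l‖ * ‖z' - z‖ + ‖t / l‖ * ‖w' - w‖ := by
        rw [dist_self_add_left, ← norm_smul, ← norm_smul]; exact norm_add_le _ _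
    _ < 2 / ‖l‖ * (δ * ‖l‖ / 3) + 1 / ‖l‖ * (δ * ‖l‖ / 3) :=
        add_lt_add_of_le_of_lt (by gcongr) (mul_lt_mul' ht hw' (norm_nonneg _) (by positivity))
    _ = δ := by field_simp; ring

end Lempert

theorem lempert_upperSemicontinuousOn_general {E : Type*} [NormedAddCommGroup E] [NormedSpace ℂ E]
    (Ω : Set E) (hΩo : IsOpen Ω) (hΩc : IsConnected Ω) :
    UpperSemicontinuousOn (fun p : E × E => lempert Ω p.1 p.2) (Ω ×ˢ Ω) := by
  rintro ⟨z, w⟩ ⟨hz, hw⟩ y hy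
  obtain ⟨f, l, hf, hly⟩ := exists_isLempertDisc_norm_lt
    ((hΩc.isPreconnected.entireJoinedIn hΩo hz hw).exists_isLempertDisc hΩo) hy
  obtain ⟨g, l', K, hg, hK, hKΩ, hgK, hl', hl'y⟩ := hf.exists_mapsTo_isCompact hly
  filter_upwards [nhdsWithin_le_nhds (hg.eventually_lempert_le hΩo hK hKΩ hgK hl')]
    with q hq using hq.trans_lt hl'y

/-- Lemma 2.3: the Lempert function is upper semicontinuous on `Ω × Ω`. -/
theorem lempert_upperSemicontinuousOn {E : Type*} [NormedAddCommGroup E] [NormedSpace ℂ E]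
    [CompleteSpace E] (Ω : Set E) (hΩo : IsOpen Ω) (hΩc : IsConnected Ω) :
    UpperSemicontinuousOn (fun p : E × E => lempert Ω p.1 p.2) (Ω ×ˢ Ω) :=
  lempert_upperSemicontinuousOn_general Ω hΩo hΩc
end

section
/- Let Ω be an unbounded hyperbolic domain in a complex Banach space. Then for every b ∈ Ω, liminf_{z→∞, w→b} l_Ω(z, w) > 0. -/
open Filter Metric Set Topology MeasureTheory

/-!
Appending one holomorphic disc to a Kobayashi chain gives
`k_Ω(b, z) ≤ k_Ω(b, w) + poincareDist (l_Ω(w, z))`. For `w` near `b` the first term is small,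
since `k_Ω` is continuous for the norm topology; if `l_Ω(z, w)` were small too, `k_Ω(b, z)` would
be small, and small `k_Ω`-balls about `b` are norm-bounded, so `z` could not be near `∞`.
-/

noncomputable def diskInvolution (a t : ℂ) : ℂ := (a - t) / (1 - (starRingEnd ℂ) a * t)

lemma one_sub_conj_mul_ne_zero {a t : ℂ} (ha : ‖a‖ < 1) (ht : ‖t‖ < 1) :
    1 - (starRingEnd ℂ) a * t ≠ 0 := by
  have hlt : ‖(starRingEnd ℂ) a * t‖ < 1 := by
    rw [norm_mul, Complex.norm_conj]
    exact mul_lt_one_of_nonneg_of_lt_one_left (norm_nonneg a) ha ht.le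
  intro h
  rw [← sub_eq_zero.mp h, norm_one] at hlt
  exact hlt.false

lemma norm_diskInvolution_lt_one {a t : ℂ} (ha : ‖a‖ < 1) (ht : ‖t‖ < 1) :
    ‖diskInvolution a t‖ < 1 := by
  have hden := one_sub_conj_mul_ne_zero ha ht
  rw [diskInvolution, norm_div, div_lt_one (norm_pos_iff.mpr hden)]
  have hsa : Complex.normSq a < 1 := by rw [Complex.normSq_eq_norm_sq]; nlinarith [norm_nonneg a]
  have hst : Complex.normSq t < 1 := by rw [Complex.normSq_eq_norm_sq]; nlinarith [norm_nonneg t]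
  have hdiff : Complex.normSq (1 - (starRingEnd ℂ) a * t) - Complex.normSq (a - t)
      = (1 - Complex.normSq a) * (1 - Complex.normSq t) := by
    simp only [Complex.normSq_apply, Complex.sub_re, Complex.sub_im, Complex.mul_re,
      Complex.mul_im, Complex.one_re, Complex.one_im, Complex.conj_re, Complex.conj_im]
    ring
  have hsq : ‖a - t‖ ^ 2 < ‖1 - (starRingEnd ℂ) a * t‖ ^ 2 := by
    rw [Complex.sq_norm, Complex.sq_norm]
    nlinarith
  exact lt_of_pow_lt_pow_left₀ 2 (norm_nonneg _) hsq

lemma mapsTo_diskInvolution {a : ℂ} (ha : ‖a‖ < 1) :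
    MapsTo (diskInvolution a) (ball 0 1) (ball 0 1) := fun _ ht =>
  mem_ball_zero_iff.mpr (norm_diskInvolution_lt_one ha (mem_ball_zero_iff.mp ht))

lemma differentiableOn_diskInvolution {a : ℂ} (ha : ‖a‖ < 1) :
    DifferentiableOn ℂ (diskInvolution a) (ball 0 1) :=
  ((differentiableOn_const a).sub differentiableOn_id).div
    ((differentiableOn_const 1).sub ((differentiableOn_const _).mul differentiableOn_id))
    fun _ ht => one_sub_conj_mul_ne_zero ha (mem_ball_zero_iff.mp ht)

@[simp] lemma diskInvolution_zero (a : ℂ) : diskInvolution a 0 = a := by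
  simp [diskInvolution]

@[simp] lemma diskInvolution_self (a : ℂ) : diskInvolution a a = 0 := by
  simp [diskInvolution]

section Lempert

variable {E : Type*} [NormedAddCommGroup E] [NormedSpace ℂ E]

lemma lempert_symm_aux {Ω : Set E} {z w : E} {r : ℝ}
    (h : ∃ (f : ℂ → E) (l : ℂ), DifferentiableOn ℂ f (ball 0 1) ∧
      MapsTo f (ball 0 1) Ω ∧ f 0 = z ∧ f l = w ∧ l ∈ ball (0:ℂ) 1 ∧ r = ‖l‖) :
    ∃ (f : ℂ → E) (l : ℂ), DifferentiableOn ℂ f (ball 0 1) ∧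
      MapsTo f (ball 0 1) Ω ∧ f 0 = w ∧ f l = z ∧ l ∈ ball (0:ℂ) 1 ∧ r = ‖l‖ := by
  obtain ⟨f, l, hfd, hfΩ, hf0, hfl, hl, rfl⟩ := h
  have hl1 : ‖l‖ < 1 := mem_ball_zero_iff.mp hl
  refine ⟨f ∘ diskInvolution l, l,
    hfd.comp (differentiableOn_diskInvolution hl1) (mapsTo_diskInvolution hl1),
    hfΩ.comp (mapsTo_diskInvolution hl1), ?_, ?_, hl, rfl⟩ <;> simp [hf0, hfl]

lemma lempert_symm (Ω : Set E) (z w : E) : lempert Ω z w = lempert Ω w z := by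
  unfold lempert
  congr 1
  ext r
  exact ⟨lempert_symm_aux, lempert_symm_aux⟩

lemma lempert_nonneg (Ω : Set E) (z w : E) : 0 ≤ lempert Ω z w :=
  Real.sInf_nonneg fun _ ⟨_, l, _, _, _, _, _, hr⟩ => hr ▸ norm_nonneg l

lemma lempert_lt_one (Ω : Set E) (z w : E) : lempert Ω z w < 1 := by
  unfold lempert
  rcases Set.eq_empty_or_nonempty {r : ℝ | ∃ (f : ℂ → E) (l : ℂ),
      DifferentiableOn ℂ f (ball 0 1) ∧ MapsTo f (ball 0 1) Ω ∧ f 0 = z ∧ f l = w ∧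
      l ∈ ball (0:ℂ) 1 ∧ r = ‖l‖} with h | ⟨r, hr⟩
  · rw [h, Real.sInf_empty]
    exact one_pos
  · refine (csInf_le ⟨0, ?_⟩ hr).trans_lt ?_
    · rintro _ ⟨_, l, _, _, _, _, _, rfl⟩
      exact norm_nonneg l
    obtain ⟨-, l, -, -, -, -, hl, rfl⟩ := hr
    exact mem_ball_zero_iff.mp hl

end Lempert

lemma poincareDist_nonneg {r : ℝ} (h0 : 0 ≤ r) (h1 : r < 1) : 0 ≤ poincareDist r := by
  have : (1:ℝ) ≤ (1 + r) / (1 - r) := (one_le_div (by linarith)).mpr (by linarith)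
  unfold poincareDist
  nlinarith [Real.log_nonneg this]

lemma tendsto_poincareDist_nhds_zero : Tendsto poincareDist (𝓝 0) (𝓝 0) := by
  have hcont : ContinuousAt poincareDist 0 := by
    unfold poincareDist
    refine continuousAt_const.mul (ContinuousAt.comp (x := (0:ℝ))
      (Real.continuousAt_log (by norm_num)) ?_)
    exact ContinuousAt.div (by fun_prop) (by fun_prop) (by norm_num)
  simpa [poincareDist] using hcont.tendsto

section Kobayashi

variable {E : Type*} [NormedAddCommGroup E] [NormedSpace ℂ E] {Ω : Set E}

lemma kobayashi_le_chain {z w : E} {n : ℕ} {c : ℕ → E}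
    (h0 : c 0 = z) (hn : c n = w) (hc : ∀ i, i ≤ n → c i ∈ Ω) :
    kobayashi Ω z w ≤ ∑ i ∈ Finset.range n, poincareDist (lempert Ω (c i) (c (i + 1))) := by
  refine csInf_le ⟨0, ?_⟩ ⟨n, c, h0, hn, hc, rfl⟩
  rintro r ⟨n, c, -, -, -, rfl⟩
  exact Finset.sum_nonneg fun i _ =>
    poincareDist_nonneg (lempert_nonneg _ _ _) (lempert_lt_one _ _ _)

lemma exists_chain_sum_lt {z w : E} (hz : z ∈ Ω) (hw : w ∈ Ω) {d : ℝ}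
    (h : kobayashi Ω z w < d) :
    ∃ (n : ℕ) (c : ℕ → E), c 0 = z ∧ c n = w ∧ (∀ i, i ≤ n → c i ∈ Ω) ∧
      ∑ i ∈ Finset.range n, poincareDist (lempert Ω (c i) (c (i + 1))) < d := by
  have hne : {r : ℝ | ∃ (n : ℕ) (c : ℕ → E), c 0 = z ∧ c n = w ∧ (∀ i, i ≤ n → c i ∈ Ω) ∧
      r = ∑ i ∈ Finset.range n, poincareDist (lempert Ω (c i) (c (i + 1)))}.Nonempty := by
    refine ⟨_, 1, fun i => if i = 0 then z else w, by simp, by simp, fun i _ => ?_, rfl⟩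
    dsimp only
    split_ifs <;> assumption
  obtain ⟨r, ⟨n, c, h0, hn, hc, rfl⟩, hr⟩ := exists_lt_of_csInf_lt hne h
  exact ⟨n, c, h0, hn, hc, hr⟩

lemma kobayashi_le_kobayashi_add_poincareDist_lempert {b w z : E} (hb : b ∈ Ω) (hw : w ∈ Ω)
    (hz : z ∈ Ω) : kobayashi Ω b z ≤ kobayashi Ω b w + poincareDist (lempert Ω w z) := by
  refine le_of_forall_pos_lt_add fun ε hε => ?_
  obtain ⟨n, c, h0, hn, hc, hsum⟩ := exists_chain_sum_lt hb hw (lt_add_of_pos_right _ hε)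
  let c' : ℕ → E := fun i => if i ≤ n then c i else z
  have hc' : ∀ i, i ≤ n + 1 → c' i ∈ Ω := fun i _ => by
    unfold c'
    split_ifs with hi
    exacts [hc i hi, hz]
  have hprefix : ∑ i ∈ Finset.range n, poincareDist (lempert Ω (c' i) (c' (i + 1)))
      = ∑ i ∈ Finset.range n, poincareDist (lempert Ω (c i) (c (i + 1))) :=
    Finset.sum_congr rfl fun i hi => by
      have hi : i < n := Finset.mem_range.mp hi
      simp [c', hi.le, Nat.succ_le_of_lt hi]
  calc kobayashi Ω b z
      ≤ ∑ i ∈ Finset.range (n + 1), poincareDist (lempert Ω (c' i) (c' (i + 1))) :=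
        kobayashi_le_chain (by simp [c', h0]) (by simp [c']) hc'
    _ = ∑ i ∈ Finset.range n, poincareDist (lempert Ω (c i) (c (i + 1)))
          + poincareDist (lempert Ω w z) := by
        rw [Finset.sum_range_succ, hprefix]
        simp [c', hn]
    _ < kobayashi Ω b w + poincareDist (lempert Ω w z) + ε := by linarith

end Kobayashi

lemma IsHyperbolic.exists_norm_sub_lt_of_lempert_lt {E : Type*} [NormedAddCommGroup E]
    [NormedSpace ℂ E] {Ω : Set E} (hΩ : IsHyperbolic Ω) {b : E} (hb : b ∈ Ω) {ε : ℝ}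
    (hε : 0 < ε) : ∃ δ > 0, ∃ c > 0, ∀ z ∈ Ω, ∀ w ∈ Ω, ‖w - b‖ < δ →
      lempert Ω z w < c → ‖z - b‖ < ε := by
  obtain ⟨η, hη, hkob_small⟩ := hΩ.2.1 b hb ε hε
  obtain ⟨δ, hδ, hkob_cont⟩ := hΩ.2.2 b hb (η / 2) (half_pos hη)
  obtain ⟨c, hc, hpoincare⟩ := Metric.eventually_nhds_iff.mp
    (tendsto_poincareDist_nhds_zero.eventually (gt_mem_nhds (half_pos hη)))
  refine ⟨δ, hδ, c, hc, fun z hz w hw hwb hlem => hkob_small z hz ?_⟩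
  have hlem' : dist (lempert Ω w z) 0 < c := by
    rw [lempert_symm, Real.dist_0_eq_abs, abs_of_nonneg (lempert_nonneg _ _ _)]
    exact hlem
  calc kobayashi Ω b z ≤ kobayashi Ω b w + poincareDist (lempert Ω w z) :=
        kobayashi_le_kobayashi_add_poincareDist_lempert hb hw hz
    _ < η / 2 + η / 2 := add_lt_add (hkob_cont w hw hwb) (hpoincare hlem')
    _ = η := add_halves η

theorem lempert_liminf_pos_of_hyperbolic_general {E : Type*} [NormedAddCommGroup E]
    [NormedSpace ℂ E] (Ω : Set E) (hhyp : IsHyperbolic Ω) :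
    ∀ b ∈ Ω, ∃ c > (0:ℝ), ∀ᶠ p : E × E in
      (atInfFilter E ⊓ Filter.principal Ω) ×ˢ (nhdsWithin b Ω),
        c ≤ lempert Ω p.1 p.2 := by
  intro b hb
  obtain ⟨δ, hδ, c, hc, hclose⟩ := hhyp.exists_norm_sub_lt_of_lempert_lt hb one_pos
  refine ⟨c, hc, ?_⟩
  have hfar : ∀ᶠ z in atInfFilter E ⊓ 𝓟 Ω, z ∈ Ω ∧ ‖b‖ + 1 ≤ ‖z‖ := by
    rw [eventually_inf_principal]
    filter_upwards [preimage_mem_comap (Ici_mem_atTop (‖b‖ + 1))] with z hz hzΩ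
    exact ⟨hzΩ, hz⟩
  have hnear : ∀ᶠ w in 𝓝[Ω] b, w ∈ Ω ∧ ‖w - b‖ < δ :=
    eventually_mem_nhdsWithin.and (mem_nhdsWithin_of_mem_nhds
      (mem_of_superset (ball_mem_nhds b hδ) fun _ => mem_ball_iff_norm.mp))
  filter_upwards [hfar.prod_mk hnear] with ⟨z, w⟩ ⟨⟨hz, hzb⟩, hw, hwb⟩
  by_contra! hlt
  linarith [hclose z hz w hw hwb hlt, norm_sub_norm_le z b]

/-- Theorem 3.1, (a) ⇒ (b): on an unbounded hyperbolic domain, the Lempert function is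
bounded below away from `0` as `z → ∞`, `w → b`. -/
theorem lempert_liminf_pos_of_hyperbolic {E : Type*} [NormedAddCommGroup E]
    [NormedSpace ℂ E] [CompleteSpace E] (Ω : Set E) (hΩo : IsOpen Ω) (hΩc : IsConnected Ω)
    (hub : ¬ Bornology.IsBounded Ω) (hhyp : IsHyperbolic Ω) :
    ∀ b ∈ Ω, ∃ c > (0:ℝ), ∀ᶠ p : E × E in
      (atInfFilter E ⊓ Filter.principal Ω) ×ˢ (nhdsWithin b Ω),
        c ≤ lempert Ω p.1 p.2 :=
  lempert_liminf_pos_of_hyperbolic_general Ω hhyp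
end
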